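/- Let 0 < ε < 1 and let {x_i}_{i=1}^m be a unit-norm frame for ℝⁿ (‖x_i‖ = 1 for all i) such that ‖x_i − x_j‖ < ε for all i ≠ j. Let P be an orthogonal projection on ℝⁿ. Then at least one of the following holds: (1) ⟨P x_i, P x_j⟩ ≥ 1/2 − 4ε for all i ≠ j; (2) ⟨(I−P) x_i, (I−P) x_j⟩ ≥ 1/2 − ε for all i ≠ j. -/
import Mathlib


open scoped RealInnerProductSpace
open Finset

noncomputable section

/-- `P` is an orthogonal projection: idempotent and self-adjoint. -/
def IsOrthProj {n : ℕ} (P : EuclideanSpace ℝ (Fin n) →ₗ[ℝ] EuclideanSpace ℝ (Fin n)) : Prop :=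
  P ∘ₗ P = P ∧ ∀ x y : EuclideanSpace ℝ (Fin n), ⟪P x, y⟫ = ⟪x, P y⟫

theorem stmt12 {m n : ℕ} (ε : ℝ) (hε0 : 0 < ε) (hε1 : ε < 1)
    (x : Fin m → EuclideanSpace ℝ (Fin n))
    (hframe : Submodule.span ℝ (Set.range x) = ⊤)
    (hnorm : ∀ i, ‖x i‖ = 1)
    (hclose : ∀ i j, i ≠ j → ‖x i - x j‖ < ε)
    (P : EuclideanSpace ℝ (Fin n) →ₗ[ℝ] EuclideanSpace ℝ (Fin n))
    (hP : IsOrthProj P) :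
    (∀ i j, i ≠ j → 1 / 2 - 4 * ε ≤ ⟪P (x i), P (x j)⟫) ∨
    (∀ i j, i ≠ j → 1 / 2 - ε ≤ ⟪x i - P (x i), x j - P (x j)⟫) := by
  obtain ⟨hP1, hP2⟩ := hP
  have hid : ∀ v, P (P v) = P v := fun v => LinearMap.congr_fun hP1 v
  have hPP : ∀ u v : EuclideanSpace ℝ (Fin n), ⟪P u, P v⟫ = ⟪u, P v⟫ := by
    intro u v; rw [hP2 u (P v), hid]
  have hsplit : ∀ u v : EuclideanSpace ℝ (Fin n),
      ⟪u, v⟫ = ⟪P u, P v⟫ + ⟪u - P u, v - P v⟫ := by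
    intro u v
    have h1 := hP2 u v
    have h2 := hPP u v
    simp only [inner_sub_left, inner_sub_right]
    linarith
  have hnormP : ∀ z : EuclideanSpace ℝ (Fin n), ‖P z‖ ^ 2 + ‖z - P z‖ ^ 2 = ‖z‖ ^ 2 := by
    intro z
    have h := hsplit z z
    rw [real_inner_self_eq_norm_sq, real_inner_self_eq_norm_sq,
      real_inner_self_eq_norm_sq] at h
    linarith
  have hQle : ∀ z : EuclideanSpace ℝ (Fin n), ‖z - P z‖ ≤ ‖z‖ := by
    intro z
    have h := hnormP z
    nlinarith [norm_nonneg (P z), norm_nonneg (z - P z), norm_nonneg z]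
  have hxx : ∀ i j, i ≠ j → 1 - ε ^ 2 / 2 ≤ ⟪x i, x j⟫ := by
    intro i j hij
    have h := hclose i j hij
    have hn := norm_sub_sq_real (x i) (x j)
    rw [hnorm i, hnorm j] at hn
    nlinarith [norm_nonneg (x i - x j)]
  by_cases hcase : ∀ i, ‖P (x i)‖ ^ 2 ≤ 1 / 2
  · right
    intro i j hij
    have h1 := hxx i j hij
    have h2 : ⟪P (x i), P (x j)⟫ ≤ ‖P (x i)‖ * ‖P (x j)‖ := real_inner_le_norm _ _
    have hi := hcase i
    have hj := hcase j
    have hab : ‖P (x i)‖ * ‖P (x j)‖ ≤ 1 / 2 := by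
      nlinarith [sq_nonneg (‖P (x i)‖ - ‖P (x j)‖)]
    have hs := hsplit (x i) (x j)
    nlinarith [hε0, hε1]
  · left
    push_neg at hcase
    obtain ⟨i0, hi0⟩ := hcase
    have hb2 : ‖x i0 - P (x i0)‖ ^ 2 < 1 / 2 := by
      have h := hnormP (x i0)
      rw [hnorm i0] at h
      nlinarith
    set b := ‖x i0 - P (x i0)‖ with hb
    have hbnn : 0 ≤ b := norm_nonneg _
    have hb1 : b ≤ 1 := by nlinarith
    have hbound : ∀ i, ‖x i - P (x i)‖ ≤ b + ε := by
      intro i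
      rcases eq_or_ne i i0 with rfl | h
      · linarith
      · have hd : (x i - P (x i)) - (x i0 - P (x i0)) = (x i - x i0) - P (x i - x i0) := by
          rw [map_sub]; abel
        have h1 : ‖x i - P (x i)‖ - ‖x i0 - P (x i0)‖ ≤
            ‖(x i - P (x i)) - (x i0 - P (x i0))‖ := norm_sub_norm_le _ _
        rw [hd] at h1
        have h2 := hQle (x i - x i0)
        have h3 := hclose i i0 h
        linarith
    intro i j hij
    have h1 := hxx i j hij
    have h2 : ⟪x i - P (x i), x j - P (x j)⟫ ≤ ‖x i - P (x i)‖ * ‖x j - P (x j)‖ :=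
      real_inner_le_norm _ _
    have hs := hsplit (x i) (x j)
    have hbi := hbound i
    have hbj := hbound j
    have hqq : ‖x i - P (x i)‖ * ‖x j - P (x j)‖ ≤ (b + ε) ^ 2 := by
      nlinarith [norm_nonneg (x i - P (x i)), norm_nonneg (x j - P (x j)), hε0.le]
    nlinarith [hε0, hε1, hbnn, hb1, hb2]
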